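/- Let p be a prime, e ≥ 1, c ≥ 1 integers, and let G be a p-group of nilpotency class at most p−1 and exponent dividing p^e, presented as G = F/R with F a free group and R a normal subgroup; equivalently, γ_p(F) ≤ R and x^(p^e) ∈ R for every x ∈ F. Then for every g ∈ R ∩ γ_{c+1}(F), one has g^(p^e) ∈ [R, cF]; that is, the exponent of the c-nilpotent multiplier M^(c)(G) = (R ∩ γ_{c+1}(F))/[R, cF] divides exp(G). -/

import Mathlib

/-!
Pass to `K = F ⧸ [R, cF]`. There `γ_{c+p}(K) = 1`, and every `p^e`-th power lies in the image
of `R`, hence centralizes `γ_c(K)`. Let `℧_j` be the subgroup generated by the `p^e`-th powers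
of elements of `γ_j(K)`. For `j > c` we show `℧_j ≤ ℧_{j+1}`; as `℧_{c+p} = 1`, all `p^e`-th
powers of elements of `γ_{c+1}(K)` are trivial.

The inclusion `℧_j ≤ ℧_{j+1}` comes from Hall–Petresco type expansions
`b⁻ⁿ a⁻ⁿ (ab)ⁿ = ∏ₖ cₖ^C(n,k)` and `⁅u, xⁿ⁆ = ∏ₖ cₖ^C(n,k)`, where `cₖ` lies `k` steps deep in a
suitable N-series. Such an expansion exists for every sequence whose `k`-th forward difference
lies `k` steps deep, and these sequences are closed under products, inverses and commutators.
At `n = p^e`, the factors with `1 < k < p` are `p^e`-th powers because `p^e ∣ C(p^e, k)`, and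
those with `k ≥ p` vanish because `γ_{c+p}(K) = 1`.
-/

/-- `[R, cF]`: the iterated commutator subgroup, `[R, 0F] = R`,
`[R, (i+1)F] = ⁅[R, iF], F⁆`. -/
def iteratedCommutator {F : Type*} [Group F] (R : Subgroup F) : ℕ → Subgroup F
  | 0 => R
  | c + 1 => ⁅iteratedCommutator R c, (⊤ : Subgroup F)⁆

open scoped commutatorElement

section Sequences

variable {G : Type*} [Group G]

def mulFwdDiff (f : ℕ → G) : ℕ → G := fun n => (f n)⁻¹ * f (n + 1)

lemma mulFwdDiff_mul (f g : ℕ → G) :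
    mulFwdDiff (f * g) = g⁻¹ * mulFwdDiff f * g * mulFwdDiff g := by
  funext n
  simp only [mulFwdDiff, Pi.mul_apply, Pi.inv_apply]
  group

lemma mulFwdDiff_inv (f : ℕ → G) : mulFwdDiff f⁻¹ = f * (mulFwdDiff f)⁻¹ * f⁻¹ := by
  funext n
  simp only [mulFwdDiff, Pi.mul_apply, Pi.inv_apply]
  group

lemma mulFwdDiff_commutator (f g : ℕ → G) :
    mulFwdDiff ⁅f, g⁆ =
      ⁅f, g⁆⁻¹ * (f * ⁅mulFwdDiff f, g * mulFwdDiff g⁆ * f⁻¹) * ⁅f, g⁆ *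
        (g * ⁅f, mulFwdDiff g⁆ * g⁻¹) := by
  funext n
  simp only [mulFwdDiff, Pi.mul_apply, Pi.inv_apply, commutatorElement_def]
  group

lemma mulFwdDiff_pow_choose (x : G) (k : ℕ) :
    mulFwdDiff (fun n => x ^ n.choose (k + 1)) = fun n => x ^ n.choose k := by
  funext n
  rw [mulFwdDiff, Nat.choose_succ_succ, pow_add, pow_mul_comm, inv_mul_cancel_left]

lemma mulFwdDiff_eq_one_of_lt {w : ℕ → G} {j : ℕ} (hw : ∀ n < j + 1, w n = 1) :
    ∀ n < j, mulFwdDiff w n = 1 := fun n hn => by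
  simp [mulFwdDiff, hw n (by omega), hw (n + 1) (by omega)]

lemma eq_one_of_mulFwdDiff_eq_one {w : ℕ → G} (hw0 : w 0 = 1)
    (hw : ∀ n, mulFwdDiff w n = 1) : ∀ n, w n = 1
  | 0 => hw0
  | n + 1 => by
    have := hw n
    rwa [mulFwdDiff, eq_one_of_mulFwdDiff_eq_one hw0 hw n, inv_one, one_mul] at this

structure IsNSeries (F : ℕ → Subgroup G) : Prop where
  antitone : Antitone F
  commutator_mem {i j : ℕ} {x y : G} : x ∈ F i → y ∈ F j → ⁅x, y⁆ ∈ F (i + j)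

def DiffFiltered (F : ℕ → Subgroup G) : ℕ → ℕ → (ℕ → G) → Prop
  | 0, m, f => ∀ n, f n ∈ F m
  | k + 1, m, f => (∀ n, f n ∈ F m) ∧ DiffFiltered F k (m + 1) (mulFwdDiff f)

namespace DiffFiltered

variable {F : ℕ → Subgroup G}

lemma apply_mem {k m : ℕ} {f : ℕ → G} (hf : DiffFiltered F k m f) (n : ℕ) : f n ∈ F m := by
  cases k with
  | zero => exact hf n
  | succ k => exact hf.1 n

lemma of_succ {k m : ℕ} {f : ℕ → G} (hf : DiffFiltered F (k + 1) m f) : DiffFiltered F k m f := by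
  induction k generalizing m f with
  | zero => exact hf.1
  | succ k ih => exact ⟨hf.1, ih hf.2⟩

lemma mono (hF : Antitone F) {k m m' : ℕ} {f : ℕ → G} (hf : DiffFiltered F k m f) (hm : m' ≤ m) :
    DiffFiltered F k m' f := by
  induction k generalizing m m' f with
  | zero => exact fun n => hF hm (hf n)
  | succ k ih => exact ⟨fun n => hF hm (hf.1 n), ih hf.2 (by omega)⟩

lemma pow_choose (hF : Antitone F) {k m j : ℕ} {x : G} (hx : x ∈ F (m + j)) :
    DiffFiltered F k m (fun n => x ^ n.choose j) := by
  induction k generalizing m j x with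
  | zero => exact fun n => pow_mem (hF (by omega) hx) _
  | succ k ih =>
    refine ⟨fun n => pow_mem (hF (by omega) hx) _, ?_⟩
    cases j with
    | zero =>
      have hΔ : mulFwdDiff (fun n => x ^ n.choose 0) = fun n => (1 : G) ^ n.choose 0 := by
        funext n; simp [mulFwdDiff]
      exact hΔ ▸ ih (one_mem _)
    | succ j =>
      rw [mulFwdDiff_pow_choose]
      exact ih (by rwa [Nat.add_right_comm])

end DiffFiltered

-- Bundled so that the three closure properties are proved by a single induction on `k`:
-- the difference of a product involves a conjugate, hence a commutator.
structure DiffFilteredClosed (F : ℕ → Subgroup G) (k : ℕ) : Prop where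
  mul {m : ℕ} {f g : ℕ → G} :
    DiffFiltered F k m f → DiffFiltered F k m g → DiffFiltered F k m (f * g)
  inv {m : ℕ} {f : ℕ → G} : DiffFiltered F k m f → DiffFiltered F k m f⁻¹
  commutator {a b : ℕ} {f g : ℕ → G} :
    DiffFiltered F k a f → DiffFiltered F k b g → DiffFiltered F k (a + b) ⁅f, g⁆

namespace DiffFilteredClosed

variable {F : ℕ → Subgroup G}

lemma conj (hF : Antitone F) {k m a : ℕ} {u v : ℕ → G} (hk : DiffFilteredClosed F k)
    (hu : DiffFiltered F k m u) (hv : DiffFiltered F k a v) : DiffFiltered F k m (v * u * v⁻¹) := by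
  have h : v * u * v⁻¹ = u * ⁅u⁻¹, v⁆ := by group
  rw [h]
  exact hk.mul hu ((hk.commutator (hk.inv hu) hv).mono hF (by omega))

lemma zero (hF : IsNSeries F) : DiffFilteredClosed F 0 where
  mul hf hg n := mul_mem (hf n) (hg n)
  inv hf n := inv_mem (hf n)
  commutator hf hg n := hF.commutator_mem (hf n) (hg n)

lemma succ (hF : IsNSeries F) {k : ℕ} (hk : DiffFilteredClosed F k) :
    DiffFilteredClosed F (k + 1) where
  mul {m f g} hf hg := by
    refine ⟨fun n => mul_mem (hf.apply_mem n) (hg.apply_mem n), ?_⟩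
    have hconj := hk.conj hF.antitone hf.2 (hk.inv hg.of_succ)
    rw [inv_inv] at hconj
    rw [mulFwdDiff_mul]
    exact hk.mul hconj hg.2
  inv {m f} hf := by
    refine ⟨fun n => inv_mem (hf.apply_mem n), ?_⟩
    rw [mulFwdDiff_inv]
    exact hk.conj hF.antitone (hk.inv hf.2) hf.of_succ
  commutator {a b f g} hf hg := by
    refine ⟨fun n => hF.commutator_mem (hf.apply_mem n) (hg.apply_mem n), ?_⟩
    have hfg := hk.commutator hf.of_succ hg.of_succ
    have hgΔg : DiffFiltered F k b (g * mulFwdDiff g) :=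
      hk.mul hg.of_succ (hg.2.mono hF.antitone (by omega))
    have hΔ₁ := hk.commutator hf.2 hgΔg
    have hΔ₂ := hk.commutator hf.of_succ hg.2
    have hconj := hk.conj hF.antitone
      (hk.conj (m := a + b + 1) hF.antitone (hΔ₁.mono hF.antitone (by omega)) hf.of_succ)
      (hk.inv hfg)
    rw [inv_inv] at hconj
    rw [mulFwdDiff_commutator]
    exact hk.mul hconj (hk.conj hF.antitone (hΔ₂.mono hF.antitone (by omega)) hg.of_succ)

end DiffFilteredClosed

lemma diffFilteredClosed {F : ℕ → Subgroup G} (hF : IsNSeries F) :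
    ∀ k, DiffFilteredClosed F k
  | 0 => .zero hF
  | k + 1 => .succ hF (diffFilteredClosed hF k)

def newtonProd (c : ℕ → G) (T : ℕ) : ℕ → G :=
  fun n => ((List.range T).map fun k => c k ^ n.choose k).prod

lemma newtonProd_zero (c : ℕ → G) : newtonProd c 0 = 1 := rfl

lemma newtonProd_succ (c : ℕ → G) (T : ℕ) :
    newtonProd c (T + 1) = newtonProd c T * fun n => c T ^ n.choose T := by
  funext n
  simp only [newtonProd, List.range_succ, List.map_append, List.prod_append, List.map_cons,
    List.map_nil, List.prod_cons, List.prod_nil, mul_one, Pi.mul_apply]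

lemma newtonProd_update (c : ℕ → G) (j : ℕ) (d : G) :
    newtonProd (Function.update c j d) (j + 1) = newtonProd c j * fun n => d ^ n.choose j := by
  rw [newtonProd_succ, Function.update_self]
  congr 1
  funext n
  refine congrArg List.prod (List.map_congr_left fun k hk => ?_)
  rw [Function.update_of_ne (by simp at hk; omega)]

lemma newtonProd_add_two (c : ℕ → G) (s n : ℕ) :
    newtonProd c (s + 2) n =
      c 0 * c 1 ^ n * ((List.range s).map fun k => c (k + 2) ^ n.choose (k + 2)).prod := by
  simp [newtonProd, List.range_succ_eq_map, List.map_map, Function.comp_def, mul_assoc]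

namespace DiffFiltered

variable {F : ℕ → Subgroup G}

lemma apply_mem_of_eq_one {k m j : ℕ} {w : ℕ → G} (hw : DiffFiltered F k m w) (hj : j ≤ k)
    (h1 : ∀ n < j, w n = 1) : w j ∈ F (m + j) := by
  induction j generalizing k m w with
  | zero => exact hw.apply_mem 0
  | succ j ih =>
    obtain ⟨k, rfl⟩ : ∃ k', k = k' + 1 := ⟨k - 1, by omega⟩
    have h := ih hw.2 (by omega) (mulFwdDiff_eq_one_of_lt h1)
    rwa [mulFwdDiff, h1 j (by omega), inv_one, one_mul, Nat.add_right_comm] at h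

lemma eq_one_of_eq_bot {k m : ℕ} {w : ℕ → G} (hw : DiffFiltered F k m w) (hbot : F (m + k) = ⊥)
    (h1 : ∀ n < k, w n = 1) : ∀ n, w n = 1 := by
  induction k generalizing m w with
  | zero =>
    rw [Nat.add_zero] at hbot
    exact fun n => by simpa [hbot] using hw.apply_mem n
  | succ k ih =>
    refine eq_one_of_mulFwdDiff_eq_one (h1 0 (by omega)) ?_
    exact ih hw.2 (by rwa [Nat.add_right_comm, Nat.add_assoc]) (mulFwdDiff_eq_one_of_lt h1)

theorem exists_newtonProd_eq_of_lt (hF : IsNSeries F) {T m : ℕ} {f : ℕ → G}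
    (hf : DiffFiltered F T m f) : ∀ j ≤ T, ∃ c : ℕ → G, (∀ k, c k ∈ F (m + k)) ∧
      DiffFiltered F T m ((newtonProd c j)⁻¹ * f) ∧ ∀ n < j, f n = newtonProd c j n
  | 0, _ => ⟨1, fun _ => one_mem _, by simpa [newtonProd_zero] using hf, by simp⟩
  | j + 1, hj => by
    obtain ⟨c, hc, hw, hagree⟩ := exists_newtonProd_eq_of_lt hF hf j (by omega)
    set w := (newtonProd c j)⁻¹ * f
    have hd : w j ∈ F (m + j) := hw.apply_mem_of_eq_one (by omega) fun n hn => by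
      simp [w, hagree n hn]
    refine ⟨Function.update c j (w j), fun k => ?_, ?_, fun n hn => ?_⟩
    · rcases eq_or_ne k j with rfl | hk
      · simpa using hd
      · simpa [Function.update_of_ne hk] using hc k
    · rw [newtonProd_update, mul_inv_rev, mul_assoc]
      exact (diffFilteredClosed hF T).mul
        ((diffFilteredClosed hF T).inv (pow_choose hF.antitone hd)) hw
    · rw [newtonProd_update, Pi.mul_apply]
      rcases Nat.lt_succ_iff_lt_or_eq.mp hn with hn | rfl
      · rw [hagree n hn, Nat.choose_eq_zero_of_lt hn, pow_zero, mul_one]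
      · simp [w]

theorem exists_eq_newtonProd (hF : IsNSeries F) {T m : ℕ} {f : ℕ → G}
    (hf : DiffFiltered F T m f) (hbot : F (m + T) = ⊥) :
    ∃ c : ℕ → G, (∀ k, c k ∈ F (m + k)) ∧ f = newtonProd c T := by
  obtain ⟨c, hc, hw, hagree⟩ := exists_newtonProd_eq_of_lt hF hf T le_rfl
  refine ⟨c, hc, funext fun n => ?_⟩
  have h := hw.eq_one_of_eq_bot hbot (fun n hn => by simp [hagree n hn]) n
  rw [Pi.mul_apply, Pi.inv_apply, inv_mul_eq_one] at h
  exact h.symm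

theorem inv_pow_mul_mem (hF : IsNSeries F) {T m : ℕ} {f : ℕ → G} (hf : DiffFiltered F T m f)
    (hbot : F (m + T) = ⊥) (hT : 2 ≤ T) (hf0 : f 0 = 1) {H : Subgroup G} {q : ℕ}
    (hH : ∀ k, 2 ≤ k → ∀ x ∈ F (m + k), x ^ q.choose k ∈ H) :
    (f 1 ^ q)⁻¹ * f q ∈ H := by
  obtain ⟨c, hc, rfl⟩ := hf.exists_eq_newtonProd hF hbot
  obtain ⟨s, rfl⟩ : ∃ s, T = s + 2 := ⟨T - 2, by omega⟩
  have htail : ∀ n ≤ 1, ((List.range s).map fun k => c (k + 2) ^ n.choose (k + 2)).prod = 1 :=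
    fun n hn => List.prod_eq_one fun x hx => by
      obtain ⟨k, -, rfl⟩ := List.mem_map.mp hx
      rw [Nat.choose_eq_zero_of_lt (by omega), pow_zero]
  have hc0 : c 0 = 1 := by simpa [newtonProd_add_two, htail] using hf0
  rw [newtonProd_add_two, newtonProd_add_two, htail 1 le_rfl, hc0]
  simp only [one_mul, pow_one, mul_one, inv_mul_cancel_left]
  refine Subgroup.list_prod_mem _ fun x hx => ?_
  obtain ⟨k, -, rfl⟩ := List.mem_map.mp hx
  exact hH (k + 2) (by omega) _ (hc _)

end DiffFiltered

end Sequences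

section CommutatorSubgroups

variable {G : Type*} [Group G]

theorem Subgroup.commutator_commutator_le_of_rotate {H₁ H₂ H₃ N : Subgroup G} [N.Normal]
    (h₁ : ⁅⁅H₂, H₃⁆, H₁⁆ ≤ N) (h₂ : ⁅⁅H₃, H₁⁆, H₂⁆ ≤ N) : ⁅⁅H₁, H₂⁆, H₃⁆ ≤ N := by
  have hbot : ∀ {X : Subgroup G}, X ≤ N ↔ X.map (QuotientGroup.mk' N) = ⊥ := by
    intro X
    rw [Subgroup.map_eq_bot_iff, QuotientGroup.ker_mk']
  simp only [hbot, Subgroup.map_commutator] at h₁ h₂ ⊢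
  exact Subgroup.commutator_commutator_eq_bot_of_rotate h₁ h₂

instance iteratedCommutator_normal (N : Subgroup G) [N.Normal] :
    ∀ i, (iteratedCommutator N i).Normal
  | 0 => ‹_›
  | i + 1 => by
    have := iteratedCommutator_normal N i
    exact Subgroup.commutator_normal _ _

theorem iteratedCommutator_top : ∀ n,
    iteratedCommutator (⊤ : Subgroup G) n = (⊤ : Subgroup G).lowerCentralSeries n
  | 0 => rfl
  | n + 1 => congrArg (⁅·, ⊤⁆) (iteratedCommutator_top n)

theorem commutator_iteratedCommutator_lowerCentralSeries_le (N : Subgroup G) [N.Normal] :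
    ∀ i j, ⁅iteratedCommutator N j, (⊤ : Subgroup G).lowerCentralSeries i⁆ ≤
      iteratedCommutator N (j + i + 1)
  | 0, j => le_rfl
  | i + 1, j => by
    rw [Subgroup.lowerCentralSeries_succ, Subgroup.commutator_comm]
    refine Subgroup.commutator_commutator_le_of_rotate ?_ ?_
    · rw [Subgroup.commutator_comm ⊤, show j + (i + 1) + 1 = j + 1 + i + 1 by omega]
      exact commutator_iteratedCommutator_lowerCentralSeries_le N i (j + 1)
    · exact Subgroup.commutator_mono
        (commutator_iteratedCommutator_lowerCentralSeries_le N i j) le_rfl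

theorem Subgroup.commutator_lowerCentralSeries_le (i j : ℕ) :
    ⁅(⊤ : Subgroup G).lowerCentralSeries i, (⊤ : Subgroup G).lowerCentralSeries j⁆ ≤
      (⊤ : Subgroup G).lowerCentralSeries (i + j + 1) := by
  simpa only [iteratedCommutator_top]
    using commutator_iteratedCommutator_lowerCentralSeries_le (⊤ : Subgroup G) j i

theorem lowerCentralSeries_add_le_iteratedCommutator {N : Subgroup G} {a : ℕ}
    (h : (⊤ : Subgroup G).lowerCentralSeries a ≤ N) :
    ∀ i, (⊤ : Subgroup G).lowerCentralSeries (a + i) ≤ iteratedCommutator N i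
  | 0 => h
  | i + 1 => Subgroup.commutator_mono (lowerCentralSeries_add_le_iteratedCommutator h i) le_rfl

end CommutatorSubgroups

section LowerCentralFiltration

variable (G : Type*) [Group G]

-- `γ_{s m}` in the 1-indexed convention, where `γ_0 = γ_1 = G` (via `s * 0 - 1 = 0`).
def scaledLowerCentralSeries (s m : ℕ) : Subgroup G :=
  (⊤ : Subgroup G).lowerCentralSeries (s * m - 1)

theorem isNSeries_scaledLowerCentralSeries (s : ℕ) :
    IsNSeries (scaledLowerCentralSeries G s) where
  antitone _ _ h := (⊤ : Subgroup G).lowerCentralSeries_antitone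
    (Nat.sub_le_sub_right (Nat.mul_le_mul_left s h) 1)
  commutator_mem {i j x y} hx hy := by
    unfold scaledLowerCentralSeries at *
    rcases Nat.eq_zero_or_pos i with rfl | hi
    · simpa using Subgroup.commutator_le_right _ _ (Subgroup.commutator_mem_commutator hx hy)
    rcases Nat.eq_zero_or_pos j with rfl | hj
    · simpa using Subgroup.commutator_le_left _ _ (Subgroup.commutator_mem_commutator hx hy)
    refine (⊤ : Subgroup G).lowerCentralSeries_antitone ?_
      (Subgroup.commutator_lowerCentralSeries_le _ _
        (Subgroup.commutator_mem_commutator hx hy))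
    rw [Nat.mul_add]
    rcases Nat.eq_zero_or_pos s with rfl | hs
    · simp
    · have := Nat.mul_pos hs hi
      have := Nat.mul_pos hs hj
      omega

end LowerCentralFiltration

theorem Nat.dvd_choose_of_coprime {n k : ℕ} (h : n.Coprime k) : n ∣ n.choose k := by
  rcases k with _ | l
  · simp [(Nat.coprime_zero_right n).mp h]
  rcases n with _ | m
  · simp
  · exact h.dvd_of_dvd_mul_right (Dvd.intro _ (Nat.add_one_mul_choose_eq m l))

theorem Nat.Prime.pow_dvd_choose_pow {p e k : ℕ} (hp : p.Prime) (hk : 0 < k) (hkp : k < p) :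
    p ^ e ∣ (p ^ e).choose k :=
  Nat.dvd_choose_of_coprime ((Nat.coprime_of_lt_prime hk.ne' hkp hp).pow_left e)

section Agemo

variable {G : Type*} [Group G]

def agemo (H : Subgroup G) (q : ℕ) : Subgroup G :=
  Subgroup.closure ((· ^ q) '' H)

theorem pow_mem_agemo_of_dvd {H : Subgroup G} {q n : ℕ} {x : G} (hx : x ∈ H) (h : q ∣ n) :
    x ^ n ∈ agemo H q := by
  obtain ⟨m, rfl⟩ := h
  rw [pow_mul]
  exact pow_mem (Subgroup.subset_closure (Set.mem_image_of_mem _ hx)) m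

@[simp]
theorem agemo_bot (q : ℕ) : agemo (⊥ : Subgroup G) q = ⊥ := by
  simp [agemo]

end Agemo

section PowerStructure

variable {K : Type*} [Group K] {p e c : ℕ}

theorem pow_choose_mem_agemo (hp : p.Prime) {N : ℕ}
    (hN : (⊤ : Subgroup K).lowerCentralSeries N = ⊥) {i j k : ℕ} (hk : 0 < k) (hj : j ≤ i)
    (hkN : p ≤ k → N ≤ i) {x : K} (hx : x ∈ (⊤ : Subgroup K).lowerCentralSeries i) :
    x ^ (p ^ e).choose k ∈ agemo ((⊤ : Subgroup K).lowerCentralSeries j) (p ^ e) := by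
  rcases lt_or_ge k p with hkp | hkp
  · exact pow_mem_agemo_of_dvd ((⊤ : Subgroup K).lowerCentralSeries_antitone hj hx)
      (hp.pow_dvd_choose_pow hk hkp)
  · have hx1 : x = 1 := by
      simpa [hN] using (⊤ : Subgroup K).lowerCentralSeries_antitone (hkN hkp) hx
    simp [hx1]

theorem pow_mul_mem_agemo (hp : p.Prime)
    (hN : (⊤ : Subgroup K).lowerCentralSeries (c + p - 1) = ⊥) {ℓ : ℕ} (hℓ : c ≤ ℓ) {a b : K}
    (ha : a ∈ (⊤ : Subgroup K).lowerCentralSeries ℓ)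
    (hb : b ∈ (⊤ : Subgroup K).lowerCentralSeries ℓ)
    (haq : a ^ p ^ e ∈ agemo ((⊤ : Subgroup K).lowerCentralSeries (ℓ + 1)) (p ^ e))
    (hbq : b ^ p ^ e ∈ agemo ((⊤ : Subgroup K).lowerCentralSeries (ℓ + 1)) (p ^ e)) :
    (a * b) ^ p ^ e ∈ agemo ((⊤ : Subgroup K).lowerCentralSeries (ℓ + 1)) (p ^ e) := by
  have hF := isNSeries_scaledLowerCentralSeries K (ℓ + 1)
  have hcl := diffFilteredClosed hF p
  have hlevel : ∀ {x : K}, x ∈ (⊤ : Subgroup K).lowerCentralSeries ℓ →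
      DiffFiltered (scaledLowerCentralSeries K (ℓ + 1)) p 0 fun n => x ^ n.choose 1 :=
    fun hx => DiffFiltered.pow_choose hF.antitone (by simpa [scaledLowerCentralSeries] using hx)
  let f : ℕ → K := (fun n => b⁻¹ ^ n.choose 1) * (fun n => a⁻¹ ^ n.choose 1) *
    fun n => (a * b) ^ n.choose 1
  have hf : DiffFiltered (scaledLowerCentralSeries K (ℓ + 1)) p 0 f :=
    hcl.mul (hcl.mul (hlevel (inv_mem hb)) (hlevel (inv_mem ha))) (hlevel (mul_mem ha hb))
  have happly (n : ℕ) : f n = b⁻¹ ^ n * a⁻¹ ^ n * (a * b) ^ n := by simp [f]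
  have hf1 : f 1 = 1 := by rw [happly]; group
  have hfq := hf.inv_pow_mul_mem hF (q := p ^ e)
    (H := agemo ((⊤ : Subgroup K).lowerCentralSeries (ℓ + 1)) (p ^ e)) ?_ hp.two_le
    (by simp [happly]) ?_
  · rw [hf1, one_pow, inv_one, one_mul] at hfq
    have hab : (a * b) ^ p ^ e = a ^ p ^ e * b ^ p ^ e * f (p ^ e) := by
      rw [happly]; group
    rw [hab]
    exact mul_mem (mul_mem haq hbq) hfq
  · rw [scaledLowerCentralSeries, eq_bot_iff, ← hN, Nat.zero_add]
    have : c + p ≤ (ℓ + 1) * p := by nlinarith [hp.two_le]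
    exact (⊤ : Subgroup K).lowerCentralSeries_antitone (by omega)
  · intro k hk x hx
    rw [scaledLowerCentralSeries, Nat.zero_add] at hx
    have : 2 * (ℓ + 1) ≤ (ℓ + 1) * k := by nlinarith
    refine pow_choose_mem_agemo hp hN (by omega) (by omega) (fun hpk => ?_) hx
    have : c + p ≤ (ℓ + 1) * k := by nlinarith
    omega

theorem commutator_pow_mem_agemo (hp : p.Prime)
    (hN : (⊤ : Subgroup K).lowerCentralSeries (c + p - 1) = ⊥) {ℓ : ℕ} (hℓ : c ≤ ℓ) {u x : K}
    (hu : u ∈ (⊤ : Subgroup K).lowerCentralSeries (ℓ - 1)) (hux : ⁅u, x ^ p ^ e⁆ = 1) :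
    ⁅u, x⁆ ^ p ^ e ∈ agemo ((⊤ : Subgroup K).lowerCentralSeries (ℓ + 1)) (p ^ e) := by
  have hF := isNSeries_scaledLowerCentralSeries K 1
  let f : ℕ → K := ⁅fun n : ℕ => u ^ n.choose 0, fun n : ℕ => x ^ n.choose 1⁆
  have hf : DiffFiltered (scaledLowerCentralSeries K 1) p (ℓ + 0) f :=
    (diffFilteredClosed hF p).commutator
      (DiffFiltered.pow_choose hF.antitone (by simpa [scaledLowerCentralSeries] using hu))
      (DiffFiltered.pow_choose hF.antitone (by simp [scaledLowerCentralSeries]))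
  have happly (n : ℕ) : f n = ⁅u, x ^ n⁆ := by simp [f, commutatorElement_def]
  have hfq := hf.inv_pow_mul_mem hF (q := p ^ e)
    (H := agemo ((⊤ : Subgroup K).lowerCentralSeries (ℓ + 1)) (p ^ e)) ?_ hp.two_le
    (by simp [happly]) ?_
  · rw [happly, happly, pow_one, hux, mul_one] at hfq
    exact inv_mem_iff.mp hfq
  · rw [scaledLowerCentralSeries, eq_bot_iff, ← hN]
    exact (⊤ : Subgroup K).lowerCentralSeries_antitone (by omega)
  · intro k hk y hy
    rw [scaledLowerCentralSeries, Nat.one_mul] at hy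
    exact pow_choose_mem_agemo hp hN (by omega) (by omega) (fun _ => by omega) hy

theorem pow_mem_agemo_lowerCentralSeries_succ (hp : p.Prime)
    (hN : (⊤ : Subgroup K).lowerCentralSeries (c + p - 1) = ⊥)
    (hcomm : ∀ u ∈ (⊤ : Subgroup K).lowerCentralSeries (c - 1), ∀ x : K, ⁅u, x ^ p ^ e⁆ = 1)
    {ℓ : ℕ} (hℓ : c ≤ ℓ + 1) {g : K} (hg : g ∈ (⊤ : Subgroup K).lowerCentralSeries (ℓ + 1)) :
    g ^ p ^ e ∈ agemo ((⊤ : Subgroup K).lowerCentralSeries (ℓ + 2)) (p ^ e) := by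
  rw [Subgroup.lowerCentralSeries_succ, Subgroup.commutator_def] at hg
  induction hg using Subgroup.closure_induction with
  | mem g hg =>
    obtain ⟨u, hu, x, -, rfl⟩ := hg
    exact commutator_pow_mem_agemo hp hN hℓ hu
      (hcomm u ((⊤ : Subgroup K).lowerCentralSeries_antitone (by omega) hu) x)
  | one => simp
  | mul a b ha hb iha ihb =>
    rw [← Subgroup.commutator_def, ← Subgroup.lowerCentralSeries_succ] at ha hb
    exact pow_mul_mem_agemo hp hN hℓ ha hb iha ihb
  | inv a _ ih =>
    rw [inv_pow]
    exact inv_mem ih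

theorem pow_eq_one_of_mem_lowerCentralSeries (hp : p.Prime) (hc : 1 ≤ c)
    (hN : (⊤ : Subgroup K).lowerCentralSeries (c + p - 1) = ⊥)
    (hcomm : ∀ u ∈ (⊤ : Subgroup K).lowerCentralSeries (c - 1), ∀ x : K, ⁅u, x ^ p ^ e⁆ = 1)
    {g : K} (hg : g ∈ (⊤ : Subgroup K).lowerCentralSeries c) : g ^ p ^ e = 1 := by
  have hchain : ∀ d, agemo ((⊤ : Subgroup K).lowerCentralSeries c) (p ^ e) ≤
      agemo ((⊤ : Subgroup K).lowerCentralSeries (c + d)) (p ^ e) := by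
    intro d
    induction d with
    | zero => exact le_rfl
    | succ d ih =>
      obtain ⟨ℓ, hℓ⟩ : ∃ ℓ, c + d = ℓ + 1 := ⟨c + d - 1, by omega⟩
      refine ih.trans (Subgroup.closure_le _ |>.mpr ?_)
      rintro _ ⟨x, hx, rfl⟩
      rw [hℓ] at hx
      rw [← Nat.add_assoc, hℓ]
      exact pow_mem_agemo_lowerCentralSeries_succ hp hN hcomm (by omega) hx
  have h := hchain (p - 1) (pow_mem_agemo_of_dvd hg dvd_rfl)
  rwa [show c + (p - 1) = c + p - 1 by have := hp.one_le; omega, hN, agemo_bot,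
    Subgroup.mem_bot] at h

end PowerStructure

theorem nilpotentMultiplier_exponent_dvd_of_class_lt_p_general {F : Type*} [Group F]
    (R : Subgroup F) [R.Normal] (p e c : ℕ) (hp : p.Prime)
    (hc : 1 ≤ c)
    (hnil : (⊤ : Subgroup F).lowerCentralSeries (p - 1) ≤ R)
    (hexp : ∀ x : F, x ^ (p ^ e) ∈ R)
    (g : F) (hg : g ∈ R ⊓ (⊤ : Subgroup F).lowerCentralSeries c) :
    g ^ (p ^ e) ∈ iteratedCommutator R c := by
  let π := QuotientGroup.mk' (iteratedCommutator R c)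
  have hπ : Function.Surjective π := QuotientGroup.mk'_surjective _
  have hlcs (n : ℕ) : (⊤ : Subgroup (F ⧸ iteratedCommutator R c)).lowerCentralSeries n =
      ((⊤ : Subgroup F).lowerCentralSeries n).map π := by
    rw [Subgroup.map_lowerCentralSeries, Subgroup.map_top_of_surjective π hπ]
  rw [← QuotientGroup.eq_one_iff, QuotientGroup.mk_pow]
  refine pow_eq_one_of_mem_lowerCentralSeries hp hc ?_ ?_
    (hlcs c ▸ Subgroup.mem_map_of_mem π hg.2)
  · rw [hlcs, Subgroup.map_eq_bot_iff, QuotientGroup.ker_mk',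
      show c + p - 1 = p - 1 + c by have := hp.one_le; omega]
    exact lowerCentralSeries_add_le_iteratedCommutator hnil c
  · intro _ hπu x
    obtain ⟨u, hu, rfl⟩ := (hlcs (c - 1)).le hπu
    obtain ⟨x, rfl⟩ := hπ x
    rw [← map_pow, ← map_commutatorElement, MonoidHom.mem_ker.symm, QuotientGroup.ker_mk']
    have := commutator_iteratedCommutator_lowerCentralSeries_le R (c - 1) 0
    rw [Subgroup.commutator_comm, show 0 + (c - 1) + 1 = c by omega] at this
    exact this (Subgroup.commutator_mem_commutator hu (hexp x))

/-- Corollary 3.4: if `G = F/R` is a `p`-group of class at most `p - 1` and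
exponent dividing `p^e` (i.e. `γ_p(F) ≤ R` and `x^(p^e) ∈ R` for all `x ∈ F`),
then every `g ∈ R ∩ γ_{c+1}(F)` satisfies `g^(p^e) ∈ [R, cF]`; that is, the
exponent of `M^(c)(G) = (R ∩ γ_{c+1}(F))/[R, cF]` divides `exp(G)`.
(Here `γ_p(F) = lowerCentralSeries F (p - 1)`.) -/
theorem nilpotentMultiplier_exponent_dvd_of_class_lt_p {F : Type*} [Group F]
    [IsFreeGroup F] (R : Subgroup F) [R.Normal] (p e c : ℕ) (hp : p.Prime)
    (he : 1 ≤ e) (hc : 1 ≤ c)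
    (hnil : (⊤ : Subgroup F).lowerCentralSeries (p - 1) ≤ R)
    (hexp : ∀ x : F, x ^ (p ^ e) ∈ R)
    (g : F) (hg : g ∈ R ⊓ (⊤ : Subgroup F).lowerCentralSeries c) :
    g ^ (p ^ e) ∈ iteratedCommutator R c :=
  nilpotentMultiplier_exponent_dvd_of_class_lt_p_general R p e c hp hc hnil hexp g hg
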